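/- Let N be a finite nilpotent group and w a word with parameters from N in n variables. The induced map w : Nⁿ → N is surjective if and only if all its fibers have size |N|^(n-1). -/

import Mathlib

/-- The map `Nⁿ → N` induced by a word with parameters from `N`
(an element of the free product `N ∗ F⟨x₁,…,xₙ⟩`). -/
def paramWordMap {N : Type*} [Group N] {n : ℕ}
    (w : Monoid.Coprod N (FreeGroup (Fin n))) (v : Fin n → N) : N :=
  Monoid.Coprod.lift (MonoidHom.id N) (FreeGroup.lift v) w

/-- The exponent sum of the variable `xᵢ` in a word with parameters. -/
def paramExpSum {N : Type*} [Group N] {n : ℕ}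
    (w : Monoid.Coprod N (FreeGroup (Fin n))) (i : Fin n) : ℤ :=
  Multiplicative.toAdd <|
    Monoid.Coprod.lift 1
      (FreeGroup.lift fun j => if j = i then Multiplicative.ofAdd (1 : ℤ) else 1) w

/-!
Write `Z` for the center of `N` and `eᵢ` for the exponent sum of `xᵢ` in `w`. Multiplying the
arguments of `w` by central elements `zᵢ` multiplies its value by `∏ zᵢ ^ eᵢ`. Hence, if
`φ : Zⁿ → Z, z ↦ ∏ zᵢ ^ eᵢ` is onto, the fiber of `w` over `g` maps onto the fiber over `gZ` of the
word induced on `N ⧸ Z`, each fiber of that map being a coset of `ker φ`; since `|ker φ| = |Z|ⁿ⁻¹`,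
induction along the upper central series gives `|w⁻¹(g)| = |N|ⁿ⁻¹`.

If `φ` is not onto, an element of prime order `p` in `Z ⧸ φ(Zⁿ)` shows that `p` divides `|Z|` and
every `eᵢ`. As `N` is nilpotent, it maps onto a Sylow `p`-subgroup and hence onto an abelian
`p`-group `A ≠ 1`. There `w` becomes `v ↦ c · (∏ vᵢ ^ (eᵢ / p)) ^ p`, which cannot be onto, since
`a ↦ a ^ p` is not injective on `A`.
-/

open scoped IsMulCommutative
open Function Subgroup

section PowProd

variable {A : Type*} [CommGroup A] {ι : Type*} [Fintype ι]

def powProdHom (e : ι → ℤ) : (ι → A) →* A where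
  toFun z := ∏ i, z i ^ e i
  map_one' := by simp
  map_mul' z z' := by simp [mul_zpow, Finset.prod_mul_distrib]

theorem powProdHom_apply (e : ι → ℤ) (z : ι → A) : powProdHom e z = ∏ i, z i ^ e i := rfl

theorem powProdHom_mulSingle [DecidableEq ι] (e : ι → ℤ) (i : ι) (a : A) :
    powProdHom e (Pi.mulSingle i a) = a ^ e i := by
  rw [powProdHom_apply, Finset.prod_eq_single i] <;> simp_all

theorem powProdHom_zero_left (z : ι → A) : powProdHom 0 z = 1 := by
  simp [powProdHom_apply]

theorem powProdHom_add_left (e e' : ι → ℤ) (z : ι → A) :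
    powProdHom (e + e') z = powProdHom e z * powProdHom e' z := by
  simp [powProdHom_apply, zpow_add, Finset.prod_mul_distrib]

theorem powProdHom_neg_left (e : ι → ℤ) (z : ι → A) :
    powProdHom (-e) z = (powProdHom e z)⁻¹ := by
  simp [powProdHom_apply]

theorem powProdHom_smul_left (k : ℤ) (e : ι → ℤ) (z : ι → A) :
    powProdHom (k • e) z = powProdHom e z ^ k := by
  simp [powProdHom_apply, ← Finset.prod_zpow, ← zpow_mul, mul_comm]

theorem powProdHom_single_left [DecidableEq ι] (i : ι) (z : ι → A) :
    powProdHom (Pi.single i 1) z = z i := by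
  rw [powProdHom_apply, Finset.prod_eq_single i] <;> simp_all

theorem exists_prime_dvd_of_not_surjective_powProdHom [Finite A] {e : ι → ℤ}
    (h : ¬ Surjective (powProdHom (A := A) e)) :
    ∃ p : ℕ, p.Prime ∧ p ∣ Nat.card A ∧ ∀ i, (p : ℤ) ∣ e i := by
  classical
  set H := (powProdHom (A := A) e).range
  have : Nontrivial (A ⧸ H) := QuotientGroup.nontrivial_iff.mpr (mt MonoidHom.range_eq_top.mp h)
  obtain ⟨p, hp, hpH⟩ := Nat.exists_prime_and_dvd (Finite.one_lt_card (α := A ⧸ H)).ne'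
  have := Fact.mk hp
  obtain ⟨x, hx⟩ := exists_prime_orderOf_dvd_card' p hpH
  obtain ⟨a, rfl⟩ := QuotientGroup.mk_surjective x
  refine ⟨p, hp, hpH.trans (card_quotient_dvd_card H), fun i => ?_⟩
  rw [← hx, orderOf_dvd_iff_zpow_eq_one, ← QuotientGroup.mk_zpow, QuotientGroup.eq_one_iff]
  exact ⟨Pi.mulSingle i a, powProdHom_mulSingle e i a⟩

end PowProd

section WordMaps

variable {N M A : Type*} [Group N] [Group M] [CommGroup A] {n : ℕ}

def mapParams (f : N →* M) :
    Monoid.Coprod N (FreeGroup (Fin n)) →* Monoid.Coprod M (FreeGroup (Fin n)) :=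
  Monoid.Coprod.map f (MonoidHom.id _)

theorem paramWordMap_mapParams (f : N →* M) (w : Monoid.Coprod N (FreeGroup (Fin n)))
    (v : Fin n → N) : paramWordMap (mapParams f w) (f ∘ v) = f (paramWordMap w v) := by
  simp only [paramWordMap, mapParams, ← MonoidHom.comp_apply]
  congr 1
  ext <;> simp

theorem paramExpSum_mapParams (f : N →* M) (w : Monoid.Coprod N (FreeGroup (Fin n))) :
    paramExpSum (mapParams f w) = paramExpSum w := by
  ext i
  simp only [paramExpSum, mapParams, ← MonoidHom.comp_apply]
  congr 2
  ext <;> simp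

theorem Function.Surjective.paramWordMap_mapParams {f : N →* M} (hf : Surjective f)
    {w : Monoid.Coprod N (FreeGroup (Fin n))} (hw : Surjective (paramWordMap w)) :
    Surjective (paramWordMap (mapParams f w)) := by
  intro y
  obtain ⟨x, rfl⟩ := hf y
  obtain ⟨v, rfl⟩ := hw x
  exact ⟨f ∘ v, _root_.paramWordMap_mapParams f w v⟩

theorem paramExpSum_one : paramExpSum (1 : Monoid.Coprod N (FreeGroup (Fin n))) = 0 := by
  ext i
  simp [paramExpSum]

theorem paramExpSum_mul (x y : Monoid.Coprod N (FreeGroup (Fin n))) :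
    paramExpSum (x * y) = paramExpSum x + paramExpSum y := by
  ext i
  simp [paramExpSum]

theorem paramExpSum_inl (m : N) :
    paramExpSum (Monoid.Coprod.inl m : Monoid.Coprod N (FreeGroup (Fin n))) = 0 := by
  ext i
  simp [paramExpSum]

theorem paramExpSum_inr_of (j : Fin n) :
    paramExpSum (Monoid.Coprod.inr (FreeGroup.of j) : Monoid.Coprod N (FreeGroup (Fin n))) =
      Pi.single j 1 := by
  ext i
  by_cases h : j = i
  · subst h; simp [paramExpSum]
  · simp [paramExpSum, h, Ne.symm h]

theorem paramExpSum_inv (x : Monoid.Coprod N (FreeGroup (Fin n))) :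
    paramExpSum x⁻¹ = -paramExpSum x := by
  ext i
  simp [paramExpSum]

theorem Monoid.Coprod.lift_one_freeGroupLift (w : Monoid.Coprod N (FreeGroup (Fin n)))
    (z : Fin n → A) :
    Monoid.Coprod.lift 1 (FreeGroup.lift z) w = powProdHom (paramExpSum w) z := by
  induction w using Monoid.Coprod.induction_on with
  | inl m => simp [paramExpSum_inl, powProdHom_zero_left]
  | inr x =>
    induction x using FreeGroup.induction_on with
    | C1 => simp [paramExpSum_one, powProdHom_zero_left]
    | of j => simp [paramExpSum_inr_of, powProdHom_single_left]
    | inv_of j h => simp_all [paramExpSum_inv, powProdHom_neg_left]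
    | mul x y hx hy => simp_all [paramExpSum_mul, powProdHom_add_left]
  | mul x y hx hy => simp_all [paramExpSum_mul, powProdHom_add_left]

theorem paramWordMap_mul_center (w : Monoid.Coprod N (FreeGroup (Fin n))) (v : Fin n → N)
    (z : Fin n → center N) :
    paramWordMap w (v * fun i => (z i : N)) =
      paramWordMap w v * ((powProdHom (paramExpSum w) z : center N) : N) := by
  rw [← Monoid.Coprod.lift_one_freeGroupLift]
  -- Since the `zᵢ` are central, the right-hand side is a homomorphism in `w` as well.
  have key : Monoid.Coprod.lift (.id N) (FreeGroup.lift (v * fun i => (z i : N))) =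
      ((MonoidHom.id N).noncommCoprod (center N).subtype fun a c => mem_center_iff.mp c.2 a).comp
        ((Monoid.Coprod.lift (.id N) (FreeGroup.lift v)).prod
          (Monoid.Coprod.lift 1 (FreeGroup.lift z))) := by
    ext <;> simp [MonoidHom.noncommCoprod]
  exact DFunLike.congr_fun key w

theorem paramWordMap_eq_mul_powProdHom (w : Monoid.Coprod A (FreeGroup (Fin n))) (v : Fin n → A) :
    paramWordMap w v = paramWordMap w 1 * powProdHom (paramExpSum w) v := by
  have key : Monoid.Coprod.lift (.id A) (FreeGroup.lift v) =
      Monoid.Coprod.lift (.id A) (FreeGroup.lift 1) * Monoid.Coprod.lift 1 (FreeGroup.lift v) := by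
    ext <;> simp
  rw [paramWordMap, key, MonoidHom.mul_apply, Monoid.Coprod.lift_one_freeGroupLift]
  rfl

theorem not_surjective_paramWordMap_of_commGroup [Finite A] {p : ℕ} (hp : p.Prime)
    (hpA : p ∣ Nat.card A) (w : Monoid.Coprod A (FreeGroup (Fin n)))
    (he : ∀ i, (p : ℤ) ∣ paramExpSum w i) : ¬ Surjective (paramWordMap w) := by
  intro hw
  have := Fact.mk hp
  have hpow : Surjective fun a : A => a ^ p := by
    intro b
    obtain ⟨v, hv⟩ := hw (paramWordMap w 1 * b)
    rw [paramWordMap_eq_mul_powProdHom, mul_right_inj] at hv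
    have hdiv : paramExpSum w = (p : ℤ) • fun i => paramExpSum w i / p :=
      funext fun i => (Int.mul_ediv_cancel' (he i)).symm
    refine ⟨powProdHom (fun i => paramExpSum w i / p) v, ?_⟩
    dsimp only
    rw [← zpow_natCast, ← powProdHom_smul_left, ← hdiv, hv]
  obtain ⟨x, hx⟩ := exists_prime_orderOf_dvd_card' p hpA
  have hx1 : x = 1 :=
    Finite.injective_iff_surjective.mpr hpow (by simp [← hx, pow_orderOf_eq_one])
  exact hp.one_lt.ne' (by rw [← hx, hx1, orderOf_one])

end WordMaps

section Nilpotent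

variable {N : Type*} [Group N] [Finite N] [Group.IsNilpotent N]

theorem Sylow.exists_surjective_of_isNilpotent {p : ℕ} [Fact p.Prime] (P : Sylow p N)
    (hp : p ∣ Nat.card N) : ∃ f : N →* P, Surjective f := by
  obtain ⟨e⟩ := (Group.isNilpotent_of_finite_tfae (G := N)).out 0 4 |>.mp ‹_›
  let q : (Nat.card N).primeFactors := ⟨p, Nat.mem_primeFactors.mpr ⟨Fact.out, hp, Nat.card_pos.ne'⟩⟩
  refine ⟨(Pi.evalMonoidHom (fun P : Sylow q N => (P : Subgroup N)) P).comp
    ((Pi.evalMonoidHom _ q).comp e.symm.toMonoidHom), ?_⟩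
  exact (surjective_eval _).comp ((surjective_eval _).comp e.symm.surjective)

theorem IsPGroup.prime_dvd_card_abelianization {G : Type*} [Group G] [Finite G] [Nontrivial G]
    {p : ℕ} [Fact p.Prime] (hG : IsPGroup p G) : p ∣ Nat.card (Abelianization G) := by
  have := hG.isNilpotent
  have : Nontrivial (Abelianization G) :=
    QuotientGroup.nontrivial_iff.mpr (Group.IsSolvable.commutator_lt_top_of_nontrivial G).ne
  have hA := hG.of_surjective Abelianization.of QuotientGroup.mk_surjective
  exact hA.card_eq_or_dvd.resolve_left Finite.one_lt_card.ne'

theorem not_surjective_paramWordMap_of_prime_dvd {n p : ℕ} (hp : p.Prime)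
    (hpN : p ∣ Nat.card N) (w : Monoid.Coprod N (FreeGroup (Fin n)))
    (he : ∀ i, (p : ℤ) ∣ paramExpSum w i) : ¬ Surjective (paramWordMap w) := by
  intro hw
  have := Fact.mk hp
  obtain ⟨P⟩ : Nonempty (Sylow p N) := inferInstance
  obtain ⟨f, hf⟩ := P.exists_surjective_of_isNilpotent hpN
  have : Nontrivial P := (P : Subgroup N).nontrivial_iff_ne_bot.mpr (P.ne_bot_of_dvd_card hpN)
  refine not_surjective_paramWordMap_of_commGroup hp P.isPGroup'.prime_dvd_card_abelianization
    (mapParams (Abelianization.of.comp f) w) (by rwa [paramExpSum_mapParams]) ?_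
  exact (QuotientGroup.mk_surjective.comp hf).paramWordMap_mapParams hw

theorem surjective_powProdHom_center_of_surjective {n : ℕ}
    {w : Monoid.Coprod N (FreeGroup (Fin n))} (hw : Surjective (paramWordMap w)) :
    Surjective (powProdHom (A := center N) (paramExpSum w)) := by
  by_contra h
  obtain ⟨p, hp, hpZ, he⟩ := exists_prime_dvd_of_not_surjective_powProdHom h
  exact not_surjective_paramWordMap_of_prime_dvd hp (hpZ.trans (card_subgroup_dvd_card _)) w he hw

end Nilpotent

theorem Nat.card_eq_card_mul_of_forall_card_fiber {α β : Type*} [Finite α] [Finite β]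
    (f : α → β) {k : ℕ} (h : ∀ b, Nat.card {a // f a = b} = k) :
    Nat.card α = Nat.card β * k := by
  have := Fintype.ofFinite β
  rw [← Nat.card_congr (Equiv.sigmaFiberEquiv f), Nat.card_sigma]
  simp [h, Nat.card_eq_fintype_card]

section CentralQuotient

variable {N : Type*} [Group N] {n : ℕ} (w : Monoid.Coprod N (FreeGroup (Fin n)))

local notation "π" => QuotientGroup.mk' (center N)

theorem exists_lift_of_surjective_powProdHom
    (hφ : Surjective (powProdHom (A := center N) (paramExpSum w))) {g : N}
    {u : Fin n → N ⧸ center N} (hu : paramWordMap (mapParams π w) u = π g) :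
    ∃ v, paramWordMap w v = g ∧ π ∘ v = u := by
  obtain ⟨v, rfl⟩ := (QuotientGroup.mk'_surjective (center N)).comp_left u
  have hmem : (paramWordMap w v)⁻¹ * g ∈ center N := by
    beta_reduce at hu
    rw [paramWordMap_mapParams] at hu
    exact QuotientGroup.eq.mp hu
  obtain ⟨z, hz⟩ := hφ ⟨_, hmem⟩
  refine ⟨v * fun i => (z i : N), ?_, funext fun i => ?_⟩
  · rw [paramWordMap_mul_center, hz, mul_inv_cancel_left]
  · simp

theorem card_fiber_mk_eq_card_ker (a : Fin n → N) :
    Nat.card {v // paramWordMap w v = paramWordMap w a ∧ π ∘ v = π ∘ a} =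
      Nat.card (powProdHom (A := center N) (paramExpSum w)).ker := by
  symm
  refine Nat.card_congr
    { toFun z := ⟨a * fun i => (z.1 i : N), ?_, ?_⟩
      invFun v := ⟨fun i => ⟨(a i)⁻¹ * v.1 i, ?_⟩, ?_⟩
      left_inv z := by ext; simp
      right_inv v := by ext; simp }
  · rw [paramWordMap_mul_center, MonoidHom.mem_ker.mp z.2, OneMemClass.coe_one, mul_one]
  · funext i
    simp
  · exact QuotientGroup.eq.mp (congrFun v.2.2 i).symm
  · have hv : (a * fun i => (a i)⁻¹ * v.1 i) = v.1 := funext fun i => mul_inv_cancel_left _ _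
    rw [MonoidHom.mem_ker, ← Subtype.coe_inj, ← mul_right_inj (paramWordMap w a),
      ← paramWordMap_mul_center]
    simpa [hv] using v.2.1

theorem card_fiber_eq_card_fiber_quotient_mul_card_ker [Finite N]
    (hφ : Surjective (powProdHom (A := center N) (paramExpSum w))) (g : N) :
    Nat.card {v // paramWordMap w v = g} =
      Nat.card {u // paramWordMap (mapParams π w) u = π g} *
        Nat.card (powProdHom (A := center N) (paramExpSum w)).ker := by
  refine Nat.card_eq_card_mul_of_forall_card_fiber
    (fun v => ⟨π ∘ v.1, by rw [paramWordMap_mapParams, v.2]⟩) fun u => ?_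
  obtain ⟨a, rfl, ha⟩ := exists_lift_of_surjective_powProdHom w hφ u.2
  rw [← card_fiber_mk_eq_card_ker]
  exact Nat.card_congr ((Equiv.subtypeEquivRight fun _ => Subtype.ext_iff).trans
    ((Equiv.subtypeSubtypeEquivSubtypeInter _ (fun v => π ∘ v = u.1)).trans
      (Equiv.subtypeEquivRight fun v => by rw [ha])))

end CentralQuotient

theorem MonoidHom.card_ker_mul_card_of_surjective {G H : Type*} [Group G] [Group H] (f : G →* H)
    (hf : Surjective f) : Nat.card f.ker * Nat.card H = Nat.card G := by
  rw [← f.ker.card_mul_index, index_ker, MonoidHom.range_eq_top.mpr hf, card_top]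

-- Stated without `n - 1`, so that the case `n = 0` (where `N` is trivial) needs no care.
theorem card_fiber_mul_card_of_surjective {N : Type*} [Group N] [Finite N]
    [Group.IsNilpotent N] {n : ℕ} {w : Monoid.Coprod N (FreeGroup (Fin n))}
    (hw : Surjective (paramWordMap w)) (g : N) :
    Nat.card {v // paramWordMap w v = g} * Nat.card N = Nat.card N ^ n := by
  refine Group.nilpotent_center_quotient_ind (P := fun G [Group G] [Group.IsNilpotent G] =>
    ∀ [Finite G] {n : ℕ} (w : Monoid.Coprod G (FreeGroup (Fin n))),
      Surjective (paramWordMap w) → ∀ g : G,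
        Nat.card {v // paramWordMap w v = g} * Nat.card G = Nat.card G ^ n) N ?_ ?_ w hw g
  · intro G _ _ _ n w _ g
    rw [Nat.card_of_subsingleton (1 : G), Nat.card_eq_one_iff_unique.mpr
      ⟨inferInstance, ⟨⟨1, Subsingleton.elim _ _⟩⟩⟩, one_pow, one_mul]
  · intro G _ _ ih _ n w hw g
    have hφ := surjective_powProdHom_center_of_surjective hw
    have hQ := ih (mapParams (QuotientGroup.mk' _) w)
      ((QuotientGroup.mk'_surjective _).paramWordMap_mapParams hw) (QuotientGroup.mk' _ g)
    have hker := (powProdHom (A := center G) (paramExpSum w)).card_ker_mul_card_of_surjective hφ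
    rw [Nat.card_fun, Nat.card_fin] at hker
    rw [card_fiber_eq_card_fiber_quotient_mul_card_ker w hφ,
      card_eq_card_quotient_mul_card_subgroup (center G), mul_pow, ← hQ, ← hker]
    ring

/-- For a finite nilpotent group `N`, a word-with-parameters
map `w : Nⁿ → N` is surjective iff all of its fibers have size `|N|^(n-1)`. -/
theorem stmt_6 (N : Type*) [Group N] [Finite N] [Group.IsNilpotent N]
    (n : ℕ) (w : Monoid.Coprod N (FreeGroup (Fin n))) :
    Function.Surjective (paramWordMap w) ↔
      ∀ g : N, Nat.card {v : Fin n → N // paramWordMap w v = g} =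
        Nat.card N ^ (n - 1) := by
  refine ⟨fun hw g => ?_, fun h g => ?_⟩
  · have key := card_fiber_mul_card_of_surjective hw g
    rcases n with _ | n
    · simp only [pow_zero, zero_tsub] at key ⊢
      exact Nat.eq_one_of_mul_eq_one_right key
    · rw [pow_succ] at key
      exact Nat.eq_of_mul_eq_mul_right Nat.card_pos key
  · obtain ⟨⟨v, hv⟩⟩ := (Nat.card_pos_iff.mp (by rw [h g]; exact pow_pos Nat.card_pos _)).1
    exact ⟨v, hv⟩
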